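/- Let P be a slant irreducible finite Γ-colored d-complete poset with top tree T, and assume Γ is simply laced. If T contains more than one element, then T is not a chain. -/

import Mathlib

/-!
Common definitions: Dynkin diagram data, Γ-colored posets, and the coloring
properties EC, NA, AC, ICE2, UCB1, LCB1 from the paper, together with
Γ-colored d-complete and Γ-colored minuscule posets, top trees, slant
irreducibility, extensions, lower frontier censuses, and full heaps.
-/

universe u v w

variable {Γ : Type u} {P : Type v}

/-- The integers `θ a b` form a Dynkin diagram datum. -/
def DynkinDatum (θ : Γ → Γ → ℤ) : Prop :=
  (∀ a : Γ, θ a a = 2) ∧ (∀ a b : Γ, a ≠ b → θ a b ≤ 0) ∧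
    (∀ a b : Γ, a ≠ b → (θ a b = 0 ↔ θ b a = 0))

/-- Colors `a` and `b` are adjacent. -/
def AdjColor (θ : Γ → Γ → ℤ) (a b : Γ) : Prop := θ a b < 0

/-- The Dynkin diagram is simply laced. -/
def SimplyLaced (θ : Γ → Γ → ℤ) : Prop :=
  ∀ a b : Γ, a ≠ b → θ a b = 0 ∨ θ a b = -1

/-- All closed intervals are finite. -/
def LocallyFinitePoset (α : Type*) [PartialOrder α] : Prop :=
  ∀ x y : α, (Set.Icc x y).Finite

/-- A poset is connected if it cannot be written as a disjoint union of two nonempty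
subposets with no comparabilities between them. -/
def ConnectedPoset (α : Type*) [PartialOrder α] : Prop :=
  ∀ S : Set α, S.Nonempty → Sᶜ.Nonempty → ∃ x ∈ S, ∃ y ∈ Sᶜ, x ≤ y ∨ y ≤ x

section
variable [PartialOrder P]

/-- (EC) Elements with equal colors are comparable. -/
def ColoredEC (κ : P → Γ) : Prop := ∀ x y : P, κ x = κ y → x ≤ y ∨ y ≤ x

/-- (NA) Neighbors have adjacent colors. -/
def ColoredNA (θ : Γ → Γ → ℤ) (κ : P → Γ) : Prop :=
  ∀ x y : P, x ⋖ y → AdjColor θ (κ x) (κ y)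

/-- (AC) Elements with adjacent colors are comparable. -/
def ColoredAC (θ : Γ → Γ → ℤ) (κ : P → Γ) : Prop :=
  ∀ x y : P, AdjColor θ (κ x) (κ y) → x ≤ y ∨ y ≤ x

/-- (ICE2) Between consecutive elements of a color `a`, the census of colors
adjacent to `a` is two. -/
def ColoredICE2 (θ : Γ → Γ → ℤ) (κ : P → Γ) : Prop :=
  ∀ (a : Γ) (x y : P), κ x = a → κ y = a → x < y → (∀ z ∈ Set.Ioo x y, κ z ≠ a) →
    (∑ᶠ z ∈ Set.Ioo x y, -θ (κ z) a) = 2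

/-- `U(x,P)`: elements above `x` with color adjacent to that of `x`. -/
def USet (θ : Γ → Γ → ℤ) (κ : P → Γ) (x : P) : Set P :=
  {y : P | x < y ∧ AdjColor θ (κ y) (κ x)}

/-- `L(x,P)`: elements below `x` with color adjacent to that of `x`. -/
def LSet (θ : Γ → Γ → ℤ) (κ : P → Γ) (x : P) : Set P :=
  {y : P | y < x ∧ AdjColor θ (κ y) (κ x)}

/-- (UCB1) Upper frontier census bound. -/
def ColoredUCB1 (θ : Γ → Γ → ℤ) (κ : P → Γ) : Prop :=
  ∀ x : P, (∀ y : P, κ y = κ x → ¬x < y) →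
    (USet θ κ x).Finite ∧ (∑ᶠ y ∈ USet θ κ x, -θ (κ y) (κ x)) ≤ 1

/-- (LCB1) Lower frontier census bound. -/
def ColoredLCB1 (θ : Γ → Γ → ℤ) (κ : P → Γ) : Prop :=
  ∀ x : P, (∀ y : P, κ y = κ x → ¬y < x) →
    (LSet θ κ x).Finite ∧ (∑ᶠ y ∈ LSet θ κ x, -θ (κ y) (κ x)) ≤ 1

/-- A Γ-colored d-complete poset: locally finite, surjectively colored, and
satisfying EC, NA, AC, ICE2, and UCB1. -/
def GColoredDComplete (θ : Γ → Γ → ℤ) (κ : P → Γ) : Prop :=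
  LocallyFinitePoset P ∧ Function.Surjective κ ∧ ColoredEC κ ∧ ColoredNA θ κ ∧
    ColoredAC θ κ ∧ ColoredICE2 θ κ ∧ ColoredUCB1 θ κ

/-- A Γ-colored minuscule poset: Γ-colored d-complete and LCB1. -/
def GColoredMinuscule (θ : Γ → Γ → ℤ) (κ : P → Γ) : Prop :=
  GColoredDComplete θ κ ∧ ColoredLCB1 θ κ

/-- The top tree: the set of elements maximal in their color class. -/
def TopTree (κ : P → Γ) : Set P := {x : P | ∀ y : P, κ y = κ x → ¬x < y}

/-- `x` is covered by `y` within the subposet `S`. -/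
def CoversIn (S : Set P) (x y : P) : Prop :=
  x ∈ S ∧ y ∈ S ∧ x < y ∧ ∀ z ∈ S, x < z → ¬z < y

/-- Slant irreducibility of a Γ-colored d-complete poset. -/
def SlantIrreducible (κ : P → Γ) : Prop :=
  ConnectedPoset P ∧ ∀ x y : P, CoversIn (TopTree κ) x y → ∃ z : P, z ≠ y ∧ κ z = κ y

/-- A saturated chain in a subposet `S`: a chain that is convex in `S`. -/
def SaturatedChainIn (S C : Set P) : Prop :=
  C ⊆ S ∧ IsChain (· ≤ ·) C ∧ ∀ x ∈ C, ∀ y ∈ C, ∀ z ∈ S, x < z → z < y → z ∈ C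

/-- The lower frontier census at the element `y`. -/
noncomputable def LCensus (θ : Γ → Γ → ℤ) (κ : P → Γ) (y : P) : ℤ :=
  ∑ᶠ x ∈ LSet θ κ y, -θ (κ x) (κ y)

/-- A full heap: locally finite, surjectively colored, EC, NA, AC, ICE2, and every
color class order-isomorphic to ℤ. -/
def FullHeap (θ : Γ → Γ → ℤ) (κ : P → Γ) : Prop :=
  LocallyFinitePoset P ∧ Function.Surjective κ ∧ ColoredEC κ ∧ ColoredNA θ κ ∧
    ColoredAC θ κ ∧ ColoredICE2 θ κ ∧ ∀ a : Γ, Nonempty ({x : P // κ x = a} ≃o ℤ)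

end

/-- `ι` realizes the colored poset `A` as an order filter of the colored poset `B`. -/
def FilterEmbedding {G : Type*} {A B : Type*} [PartialOrder A] [PartialOrder B]
    (κ : A → G) (κ' : B → G) (ι : A → B) : Prop :=
  (∀ p q : A, ι p ≤ ι q ↔ p ≤ q) ∧ (∀ p : A, κ' (ι p) = κ p) ∧ IsUpperSet (Set.range ι)

/-- `B` is an extension of `A` by the color `a`, with extending element `x`. -/
def IsExtensionBy {G : Type*} {A B : Type*} [PartialOrder A] [PartialOrder B]
    (θ : G → G → ℤ) (κ : A → G) (κ' : B → G) (a : G) (ι : A → B) (x : B) : Prop :=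
  Finite B ∧ GColoredDComplete θ κ' ∧ ConnectedPoset B ∧
    FilterEmbedding κ κ' ι ∧ (Set.range ι)ᶜ = {x} ∧ κ' x = a

/-!
Suppose the top tree is a chain. Its greatest element `t` is the top of `P`, and slant
irreducibility gives consecutive elements `p < t` of color `κ t`. By descent, for all
consecutive `p < q` of one color some color of `U(q)` recurs in `(p, q)`, which is absurd for
`q = t`. Otherwise ICE2 (simply laced) leaves exactly two elements of `(p, q)` with color
adjacent to `κ q`, and the top-tree element of each of their colors must be one of the two. If
both lie in the top tree they are comparable, and UCB1 makes `q` the only element of `U(u)` for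
the lower one `u`, although the cover of `u` towards the upper one lies in `U(u)` below `q`.
Otherwise they are consecutive elements `u < v` of one color with `U(v) = {q}`, a smaller
counterexample.
-/

namespace DynkinDatum

variable {θ : Γ → Γ → ℤ} (hθ : DynkinDatum θ) {a b : Γ}
include hθ

lemma ne_of_adjColor (h : AdjColor θ a b) : a ≠ b := by
  rintro rfl
  have := hθ.1 a
  unfold AdjColor at h
  omega

lemma adjColor_symm (h : AdjColor θ a b) : AdjColor θ b a :=
  (hθ.2.1 b a (hθ.ne_of_adjColor h).symm).lt_of_ne
    fun h0 => h.ne ((hθ.2.2 a b (hθ.ne_of_adjColor h)).mpr h0)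

lemma adjColor_iff_ne_zero (hab : a ≠ b) : AdjColor θ a b ↔ θ a b ≠ 0 :=
  ⟨LT.lt.ne, (hθ.2.1 a b hab).lt_of_ne⟩

lemma neg_eq_one_of_adjColor (hsl : SimplyLaced θ) (h : AdjColor θ a b) : -θ a b = 1 := by
  rcases hsl a b (hθ.ne_of_adjColor h) with h0 | h1
  · exact absurd h0 h.ne
  · omega

end DynkinDatum

section Order

variable [PartialOrder P]

def ColorConsecutive (κ : P → Γ) (p q : P) : Prop :=
  κ p = κ q ∧ p < q ∧ ∀ z ∈ Set.Ioo p q, κ z ≠ κ q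

lemma Set.Finite.exists_isGreatest_of_isChain {s : Set P} (hs : s.Finite) (hne : s.Nonempty)
    (hchain : IsChain (· ≤ ·) s) : ∃ m, IsGreatest s m := by
  obtain ⟨m, hm⟩ := hs.exists_maximal hne
  refine ⟨m, hm.1, fun x hx => ?_⟩
  rcases eq_or_ne x m with rfl | hxm
  · exact le_rfl
  · exact (hchain hx hm.1 hxm).elim id (hm.2 hx)

lemma exists_coversIn {S : Set P} (hS : S.Finite) {s t : P} (hs : s ∈ S) (ht : t ∈ S)
    (hst : s < t) : ∃ s', CoversIn S s' t := by
  obtain ⟨s', hs'⟩ := (hS.sep (· < t)).exists_maximal ⟨s, hs, hst⟩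
  exact ⟨s', hs'.1.1, ht, hs'.1.2, fun z hz hs'z hzt => (hs'.2 ⟨hz, hzt⟩ hs'z.le).not_gt hs'z⟩

variable [Finite P]

lemma exists_mem_topTree_le (κ : P → Γ) (x : P) : ∃ m ∈ TopTree κ, κ m = κ x ∧ x ≤ m := by
  obtain ⟨m, hm⟩ := (Set.toFinite {y | κ y = κ x ∧ x ≤ y}).exists_maximal ⟨x, rfl, le_rfl⟩
  refine ⟨m, fun y hy hmy => ?_, hm.1⟩
  exact (hm.2 ⟨hy.trans hm.1.1, hm.1.2.trans hmy.le⟩ hmy.le).not_gt hmy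

lemma exists_colorConsecutive {κ : P → Γ} {z q : P} (hz : κ z = κ q) (hzq : z < q) :
    ∃ p, ColorConsecutive κ p q := by
  obtain ⟨p, hp⟩ := (Set.toFinite {y | κ y = κ q ∧ y < q}).exists_maximal ⟨z, hz, hzq⟩
  exact ⟨p, hp.1.1, hp.1.2, fun w hw hwκ => (hp.2 ⟨hwκ, hw.2⟩ hw.1.le).not_gt hw.1⟩

end Order

lemma finsum_mem_one_eq_ncard {α : Type*} {s : Set α} (hs : s.Finite) :
    ∑ᶠ x ∈ s, (1 : ℤ) = s.ncard := by
  rw [← Nat.cast_one, ← Nat.cast_finsum_mem hs, finsum_one]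

section SimplyLaced

variable [PartialOrder P] {θ : Γ → Γ → ℤ} {κ : P → Γ}

lemma uSet_subsingleton (hθ : DynkinDatum θ) (hsl : SimplyLaced θ) (hUCB : ColoredUCB1 θ κ)
    {x : P} (hx : x ∈ TopTree κ) : (USet θ κ x).Subsingleton := by
  obtain ⟨hfin, hsum⟩ := hUCB x hx
  rw [finsum_mem_congr rfl fun y hy => hθ.neg_eq_one_of_adjColor hsl hy.2,
    finsum_mem_one_eq_ncard hfin] at hsum
  have := hfin.to_subtype
  exact Set.ncard_le_one_iff_subsingleton.mp (by exact_mod_cast hsum)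

lemma exists_lt_of_pair (hchain : IsChain (· ≤ ·) (TopTree κ)) {A : Set P} {z₁ z₂ : P}
    (hA : A = {z₁, z₂}) (hne : z₁ ≠ z₂)
    (htop : ∀ z ∈ A, ∃ m ∈ A, m ∈ TopTree κ ∧ κ m = κ z ∧ z ≤ m) :
    ∃ u v, A = {u, v} ∧ u < v ∧ v ∈ TopTree κ ∧ (u ∈ TopTree κ ∨ κ u = κ v) := by
  subst hA
  by_cases h₁ : z₁ ∈ TopTree κ <;> by_cases h₂ : z₂ ∈ TopTree κ
  · rcases hchain h₁ h₂ hne with h | h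
    · exact ⟨z₁, z₂, rfl, h.lt_of_ne hne, h₂, .inl h₁⟩
    · exact ⟨z₂, z₁, Set.pair_comm _ _, h.lt_of_ne hne.symm, h₁, .inl h₂⟩
  · obtain ⟨m, hm, hmT, hmκ, hzm⟩ := htop z₂ (by simp)
    obtain rfl : m = z₁ := hm.resolve_right fun h => h₂ (h ▸ hmT)
    exact ⟨z₂, m, Set.pair_comm _ _, hzm.lt_of_ne hne.symm, h₁, .inr hmκ.symm⟩
  · obtain ⟨m, hm, hmT, hmκ, hzm⟩ := htop z₁ (by simp)
    obtain rfl : m = z₂ := hm.resolve_left fun h => h₁ (h ▸ hmT)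
    exact ⟨z₁, m, rfl, hzm.lt_of_ne hne, h₂, .inr hmκ.symm⟩
  · obtain ⟨m, hm, hmT, -⟩ := htop z₁ (by simp)
    rcases hm with rfl | rfl <;> contradiction

variable [Finite P]

lemma le_of_lt_of_mem_uSet (hθ : DynkinDatum θ) (hsl : SimplyLaced θ) (hNA : ColoredNA θ κ)
    (hUCB : ColoredUCB1 θ κ) {x q v : P} (hx : x ∈ TopTree κ) (hq : q ∈ USet θ κ x)
    (hxv : x < v) : q ≤ v := by
  obtain ⟨w, hxw, hwv⟩ := exists_covBy_le_of_lt hxv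
  rwa [uSet_subsingleton hθ hsl hUCB hx ⟨hxw.lt, hθ.adjColor_symm (hNA x w hxw)⟩ hq] at hwv

lemma ncard_adjColor_Ioo_eq_two (hθ : DynkinDatum θ) (hsl : SimplyLaced θ)
    (hICE : ColoredICE2 θ κ) {p q : P} (hpq : ColorConsecutive κ p q) :
    {z | z ∈ Set.Ioo p q ∧ AdjColor θ (κ z) (κ q)}.ncard = 2 := by
  have hsum := hICE (κ q) p q hpq.1 rfl hpq.2.1 hpq.2.2
  rw [finsum_mem_inter_support_eq' _ _ {z | z ∈ Set.Ioo p q ∧ AdjColor θ (κ z) (κ q)},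
    finsum_mem_congr rfl fun z hz => hθ.neg_eq_one_of_adjColor hsl hz.2,
    finsum_mem_one_eq_ncard (Set.toFinite _)] at hsum
  · exact_mod_cast hsum
  · intro z hz
    simp only [Set.mem_ofPred_eq, iff_self_and]
    exact fun hzI => (hθ.adjColor_iff_ne_zero (hpq.2.2 z hzI)).mpr (neg_ne_zero.mp hz)

lemma exists_mem_topTree_Ioo (hθ : DynkinDatum θ) (hAC : ColoredAC θ κ) {p q z : P}
    (hkey : ∀ y ∈ USet θ κ q, ∀ w ∈ Set.Ioo p q, κ w ≠ κ y) (hz : z ∈ Set.Ioo p q)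
    (hadj : AdjColor θ (κ z) (κ q)) : ∃ m ∈ TopTree κ, κ m = κ z ∧ z ≤ m ∧ m < q := by
  obtain ⟨m, hmT, hmκ, hzm⟩ := exists_mem_topTree_le κ z
  have hadj' : AdjColor θ (κ m) (κ q) := hmκ ▸ hadj
  have hmq : m ≠ q := fun h => hθ.ne_of_adjColor hadj' (congrArg κ h)
  refine ⟨m, hmT, hmκ, hzm, ?_⟩
  rcases hAC m q hadj' with h | h
  · exact h.lt_of_ne hmq
  · exact absurd hmκ.symm (hkey m ⟨h.lt_of_ne hmq.symm, hadj'⟩ z hz)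

lemma exists_uSet_color_mem_Ioo (hθ : DynkinDatum θ) (hsl : SimplyLaced θ)
    (hdc : GColoredDComplete θ κ) (hchain : IsChain (· ≤ ·) (TopTree κ)) {p q : P}
    (hpq : ColorConsecutive κ p q) : ∃ y ∈ USet θ κ q, ∃ z ∈ Set.Ioo p q, κ z = κ y := by
  obtain ⟨-, -, -, hNA, hAC, hICE, hUCB⟩ := hdc
  induction q using WellFoundedLT.induction generalizing p with
  | _ q ih =>
  by_contra! hkey
  set A := {z | z ∈ Set.Ioo p q ∧ AdjColor θ (κ z) (κ q)}
  obtain ⟨z₁, z₂, hne, hA⟩ : ∃ z₁ z₂, z₁ ≠ z₂ ∧ A = {z₁, z₂} :=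
    Set.ncard_eq_two.mp (ncard_adjColor_Ioo_eq_two hθ hsl hICE hpq)
  have htop : ∀ z ∈ A, ∃ m ∈ A, m ∈ TopTree κ ∧ κ m = κ z ∧ z ≤ m := by
    rintro z ⟨hz, hadj⟩
    obtain ⟨m, hmT, hmκ, hzm, hmq⟩ := exists_mem_topTree_Ioo hθ hAC hkey hz hadj
    exact ⟨m, ⟨⟨hz.1.trans_le hzm, hmq⟩, hmκ ▸ hadj⟩, hmT, hmκ, hzm⟩
  obtain ⟨u, v, hAuv, huv, hvT, hu_top_or_color⟩ := exists_lt_of_pair hchain hA hne htop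
  have hu : u ∈ A := by rw [hAuv]; exact Set.mem_insert u {v}
  have hv : v ∈ A := by rw [hAuv]; exact Set.mem_insert_of_mem u rfl
  have hqU : ∀ w ∈ A, q ∈ USet θ κ w := fun w hw => ⟨hw.1.2, hθ.adjColor_symm hw.2⟩
  rcases hu_top_or_color with huT | hκuv
  · exact (le_of_lt_of_mem_uSet hθ hsl hNA hUCB huT (hqU u hu) huv).not_gt hv.1.2
  · have huv_cons : ColorConsecutive κ u v := by
      refine ⟨hκuv, huv, fun w hw hwκ => ?_⟩
      have hwA : w ∈ A := ⟨⟨hu.1.1.trans hw.1, hw.2.trans hv.1.2⟩, hwκ ▸ hv.2⟩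
      rw [hAuv] at hwA
      rcases hwA with rfl | rfl
      exacts [hw.1.false, hw.2.false]
    obtain ⟨y, hy, z, hz, hzy⟩ := ih v hv.1.2 huv_cons
    rw [uSet_subsingleton hθ hsl hUCB hvT hy (hqU v hv)] at hzy
    exact hpq.2.2 z ⟨hu.1.1.trans hz.1, hz.2.trans hv.1.2⟩ hzy

end SimplyLaced

theorem topTree_not_chain_general [PartialOrder P] [Fintype P]
    (θ : Γ → Γ → ℤ) (κ : P → Γ) (hθ : DynkinDatum θ) (hsl : SimplyLaced θ)
    (hdc : GColoredDComplete θ κ) (hsi : SlantIrreducible κ)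
    (hnt : (TopTree κ).Nontrivial) :
    ¬IsChain (· ≤ ·) (TopTree κ) := by
  intro hchain
  obtain ⟨t, htT, htT_ge⟩ := (Set.toFinite _).exists_isGreatest_of_isChain hnt.nonempty hchain
  have htop : ∀ y, y ≤ t := fun y =>
    let ⟨_, hmT, _, hym⟩ := exists_mem_topTree_le κ y
    hym.trans (htT_ge hmT)
  obtain ⟨s, hsT, hst⟩ := hnt.exists_ne t
  obtain ⟨s', hcov⟩ := exists_coversIn (Set.toFinite _) hsT htT ((htT_ge hsT).lt_of_ne hst)
  obtain ⟨z, hzt, hzκ⟩ := hsi.2 s' t hcov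
  obtain ⟨p, hpt⟩ := exists_colorConsecutive hzκ ((htop z).lt_of_ne hzt)
  obtain ⟨y, hy, -⟩ := exists_uSet_color_mem_Ioo hθ hsl hdc hchain hpt
  exact hy.1.not_ge (htop y)

/-- The top tree of a slant irreducible finite Γ-colored d-complete
poset with Γ simply laced and more than one element is not a chain. -/
theorem topTree_not_chain [Fintype Γ] [PartialOrder P] [Fintype P] [Nonempty P]
    (θ : Γ → Γ → ℤ) (κ : P → Γ) (hθ : DynkinDatum θ) (hsl : SimplyLaced θ)
    (hdc : GColoredDComplete θ κ) (hsi : SlantIrreducible κ)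
    (hnt : (TopTree κ).Nontrivial) :
    ¬IsChain (· ≤ ·) (TopTree κ) :=
  topTree_not_chain_general θ κ hθ hsl hdc hsi hnt
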